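/- For the deterministic bilinear-game Hamiltonian, assume the solution set X* = {x ∈ ℝ^d : ξ(x) = 0} is nonempty and A ≠ 0, and let L_H = σ_max(A)² and μ_H = σ_min(A)², where σ_max(A) and σ_min(A) denote the largest and the smallest nonzero singular value of A. Run Hamiltonian gradient descent x^{k+1} = x^k − γ∇H(x^k) with γ = 1/(2L_H), and let x* be the orthogonal projection of x⁰ onto X*. Then ‖x^k − x*‖² ≤ (1 − γμ_H)^k ‖x⁰ − x*‖² for all k ≥ 0. -/

import Mathlib

/-!
Write `ξ(x) = M x + v` with the skew block matrix `M = [[0, A], [-Aᵀ, 0]]`. Then `H` is a linear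
least-squares objective with `∇H(x) = Mᵀ(M x + v) = MᵀM (x - x*)`, so HGD is the linear iteration
`e ↦ (I - γ MᵀM) e` on the error `e = x - x*`. Since `x*` is the projection of `x⁰`, `e⁰` lies in
`(ker M)ᗮ`, and the iteration preserves that subspace. The nonzero eigenvalues of
`MᵀM = diag(AAᵀ, AᵀA)` are those of `AᵀA`, so they lie in `[σ_min(A)², σ_max(A)²]`, and as
`γ σ_max(A)² ≤ 1`, every eigendirection in `(ker M)ᗮ` contracts: `(1 - γλ)² ≤ 1 - γλ ≤ 1 - γμ`.
-/

open scoped RealInnerProductSpace BigOperators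

noncomputable section

/-- The largest singular value of a real matrix, realized as the operator norm of the
induced linear map between Euclidean spaces. -/
def sigmaMax {d1 d2 : ℕ} (A : Matrix (Fin d1) (Fin d2) ℝ) : ℝ :=
  ‖LinearMap.toContinuousLinearMap (Matrix.toEuclideanLin A)‖

/-- Squared smallest nonzero singular value of A, i.e. the smallest nonzero
eigenvalue of Aᵀ A. -/
def sigmaMinSq {d1 d2 : ℕ} (A : Matrix (Fin d1) (Fin d2) ℝ) : ℝ :=
  sInf {t : ℝ | t ≠ 0 ∧ ∃ v : Fin d2 → ℝ, v ≠ 0 ∧ (A.transpose * A).mulVec v = t • v}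

/-- The signed gradient field ξ(x) = (A x₂ + b, −(Aᵀ x₁ + c)) of the bilinear game. -/
def xiBar {d1 d2 : ℕ} (A : Matrix (Fin d1) (Fin d2) ℝ) (b : Fin d1 → ℝ) (c : Fin d2 → ℝ)
    (x : EuclideanSpace ℝ (Fin d1 ⊕ Fin d2)) : EuclideanSpace ℝ (Fin d1 ⊕ Fin d2) :=
  (WithLp.equiv 2 _).symm (Sum.elim
    (fun a => A.mulVec (fun j => x (Sum.inr j)) a + b a)
    (fun j => -(A.transpose.mulVec (fun a => x (Sum.inl a)) j + c j)))

def Ham {d1 d2 : ℕ} (A : Matrix (Fin d1) (Fin d2) ℝ) (b : Fin d1 → ℝ) (c : Fin d2 → ℝ)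
    (x : EuclideanSpace ℝ (Fin d1 ⊕ Fin d2)) : ℝ :=
  (1 / 2 : ℝ) * ‖xiBar A b c x‖ ^ 2

section LeastSquares

open ContinuousLinearMap

variable {F G : Type*} [NormedAddCommGroup F] [InnerProductSpace ℝ F]
  [NormedAddCommGroup G] [InnerProductSpace ℝ G]

theorem Submodule.mem_orthogonal_of_forall_norm_le_norm_sub (K : Submodule ℝ F) {u : F}
    (h : ∀ w ∈ K, ‖u‖ ≤ ‖u - w‖) : u ∈ Kᗮ := by
  have hbdd : BddBelow (Set.range fun w : (K : Set F) => ‖u - w‖) :=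
    ⟨0, Set.forall_mem_range.2 fun _ => norm_nonneg _⟩
  have hmin : ‖u - 0‖ = ⨅ w : (K : Set F), ‖u - w‖ :=
    le_antisymm (le_ciInf fun w => by simpa using h w w.2)
      (by simpa using ciInf_le hbdd ⟨0, K.zero_mem⟩)
  rw [Submodule.mem_orthogonal']
  simpa using (norm_eq_iInf_iff_real_inner_eq_zero K K.zero_mem).1 hmin

variable [CompleteSpace F] [CompleteSpace G]

theorem adjoint_apply_mem_orthogonal_ker (T : F →L[ℝ] G) (y : G) : adjoint T y ∈ T.kerᗮ := by
  rw [Submodule.mem_orthogonal]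
  intro w (hw : T w = 0)
  rw [adjoint_inner_right, hw, inner_zero_left]

theorem hasGradientAt_half_norm_sq_add (T : F →L[ℝ] G) (v : G) (x : F) :
    HasGradientAt (fun y => (1 / 2 : ℝ) * ‖T y + v‖ ^ 2) (adjoint T (T x + v)) x := by
  rw [hasGradientAt_iff_hasFDerivAt]
  have := (((T.hasFDerivAt (x := x)).add_const v).norm_sq).const_mul (1 / 2 : ℝ)
  refine this.congr_fderiv (ContinuousLinearMap.ext fun h => ?_)
  simp [adjoint_inner_left]

theorem norm_sub_smul_adjoint_comp_self_sq_le [FiniteDimensional ℝ F] (T : F →L[ℝ] G)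
    {γ μ : ℝ} (hγ : 0 ≤ γ)
    (hspec : ∀ t ≠ 0, Module.End.HasEigenvalue (adjoint T ∘L T).toLinearMap t →
      μ ≤ t ∧ γ * t ≤ 1)
    {e : F} (he : e ∈ T.kerᗮ) :
    ‖e - γ • adjoint T (T e)‖ ^ 2 ≤ (1 - γ * μ) * ‖e‖ ^ 2 := by
  have hpos := (isPositive_adjoint_comp_self T).toLinearMap
  have hsymm := hpos.isSymmetric
  set S := (adjoint T ∘L T).toLinearMap
  have hn : Module.finrank ℝ F = Module.finrank ℝ F := rfl
  set b := hsymm.eigenvectorBasis hn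
  set lam := hsymm.eigenvalues hn
  have heig (i) : S (b i) = lam i • b i := hsymm.apply_eigenvectorBasis hn i
  have hcoord (i) : ⟪b i, e - γ • S e⟫ = (1 - γ * lam i) * ⟪b i, e⟫ := by
    rw [inner_sub_right, inner_smul_right, ← hsymm, heig, real_inner_smul_left]
    ring
  have hcoord_le (i) : ((1 - γ * lam i) * ⟪b i, e⟫) ^ 2 ≤ (1 - γ * μ) * ⟪b i, e⟫ ^ 2 := by
    rcases eq_or_ne (lam i) 0 with hzero | hne
    · have hker : b i ∈ T.ker := by
        rw [← ker_adjoint_comp_self, LinearMap.mem_ker]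
        exact (heig i).trans (by rw [hzero, zero_smul])
      simp [(Submodule.mem_orthogonal _ _).1 he _ hker]
    · obtain ⟨hμ, hγlam⟩ := hspec _ hne (hsymm.hasEigenvalue_eigenvalues hn i)
      have hlam := hpos.nonneg_eigenvalues hn i
      have : (1 - γ * lam i) ^ 2 ≤ 1 - γ * μ := by nlinarith [mul_nonneg hγ hlam]
      rw [mul_pow]
      exact mul_le_mul_of_nonneg_right this (sq_nonneg _)
  calc ‖e - γ • S e‖ ^ 2 = ∑ i, ((1 - γ * lam i) * ⟪b i, e⟫) ^ 2 := by
        simp only [← b.sum_sq_inner_right, hcoord]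
    _ ≤ ∑ i, (1 - γ * μ) * ⟪b i, e⟫ ^ 2 := Finset.sum_le_sum fun i _ => hcoord_le i
    _ = (1 - γ * μ) * ‖e‖ ^ 2 := by rw [← Finset.mul_sum, b.sum_sq_inner_right]

theorem norm_sub_sq_le_of_gradientDescent_half_norm_sq_add [FiniteDimensional ℝ F]
    (T : F →L[ℝ] G) (v : G) {γ μ : ℝ} (hγ : 0 ≤ γ) (hγμ : γ * μ ≤ 1)
    (hspec : ∀ t ≠ 0, Module.End.HasEigenvalue (adjoint T ∘L T).toLinearMap t →
      μ ≤ t ∧ γ * t ≤ 1)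
    {x : ℕ → F}
    (hrec : ∀ k, x (k + 1) = x k - γ • gradient (fun y => (1 / 2 : ℝ) * ‖T y + v‖ ^ 2) (x k))
    {xstar : F} (hxstar : T xstar + v = 0) (h0 : x 0 - xstar ∈ T.kerᗮ) (k : ℕ) :
    ‖x k - xstar‖ ^ 2 ≤ (1 - γ * μ) ^ k * ‖x 0 - xstar‖ ^ 2 := by
  have hstep (k) : x (k + 1) - xstar = (x k - xstar) - γ • adjoint T (T (x k - xstar)) := by
    rw [hrec, (hasGradientAt_half_norm_sq_add T v (x k)).gradient, map_sub,
      eq_neg_of_add_eq_zero_left hxstar, sub_neg_eq_add]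
    abel
  have horth (k) : x k - xstar ∈ T.kerᗮ := by
    induction k with
    | zero => exact h0
    | succ k ih =>
      rw [hstep]
      exact sub_mem ih (Submodule.smul_mem _ _ (adjoint_apply_mem_orthogonal_ker T _))
  induction k with
  | zero => simp
  | succ k ih =>
    calc ‖x (k + 1) - xstar‖ ^ 2 ≤ (1 - γ * μ) * ‖x k - xstar‖ ^ 2 := by
          rw [hstep]; exact norm_sub_smul_adjoint_comp_self_sq_le T hγ hspec (horth k)
      _ ≤ (1 - γ * μ) * ((1 - γ * μ) ^ k * ‖x 0 - xstar‖ ^ 2) := by gcongr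
      _ = (1 - γ * μ) ^ (k + 1) * ‖x 0 - xstar‖ ^ 2 := by ring

end LeastSquares

section BilinearGame

open Matrix

variable {d1 d2 : ℕ}

def gameMatrix (A : Matrix (Fin d1) (Fin d2) ℝ) : Matrix (Fin d1 ⊕ Fin d2) (Fin d1 ⊕ Fin d2) ℝ :=
  fromBlocks 0 A (-Aᵀ) 0

def gramNonzeroEigenvalues (A : Matrix (Fin d1) (Fin d2) ℝ) : Set ℝ :=
  {t | t ≠ 0 ∧ ∃ v : Fin d2 → ℝ, v ≠ 0 ∧ (Aᵀ * A) *ᵥ v = t • v}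

theorem xiBar_eq_toEuclideanCLM_add (A : Matrix (Fin d1) (Fin d2) ℝ) (b : Fin d1 → ℝ)
    (c : Fin d2 → ℝ) (x : EuclideanSpace ℝ (Fin d1 ⊕ Fin d2)) :
    xiBar A b c x =
      toEuclideanCLM (𝕜 := ℝ) (gameMatrix A) x + WithLp.toLp 2 (Sum.elim b (-c)) := by
  ext (i | j) <;> simp [xiBar, gameMatrix, fromBlocks_mulVec, Function.comp_def, neg_mulVec]
  ring

theorem gramNonzeroEigenvalues_subset_Icc (A : Matrix (Fin d1) (Fin d2) ℝ) :
    gramNonzeroEigenvalues A ⊆ Set.Icc 0 (sigmaMax A ^ 2) := by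
  rintro t ⟨-, v, hv, hvt⟩
  have hnorm : t * ‖WithLp.toLp 2 v‖ ^ 2 = ‖WithLp.toLp 2 (A *ᵥ v)‖ ^ 2 := by
    simp only [← real_inner_self_eq_norm_sq, EuclideanSpace.inner_eq_star_dotProduct, star_trivial]
    rw [← smul_eq_mul, ← smul_dotProduct, ← hvt, ← mulVec_mulVec, dotProduct_comm,
      dotProduct_mulVec, vecMul_transpose]
  have hle : ‖WithLp.toLp 2 (A *ᵥ v)‖ ≤ sigmaMax A * ‖WithLp.toLp 2 v‖ :=
    (LinearMap.toContinuousLinearMap (toEuclideanLin A)).le_opNorm _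
  have hpos : 0 < ‖WithLp.toLp 2 v‖ := by simpa using hv
  have hsq := pow_le_pow_left₀ (norm_nonneg _) hle 2
  constructor
  · exact le_of_mul_le_mul_right (by rw [zero_mul, hnorm]; positivity) (by positivity)
  · exact le_of_mul_le_mul_right (by rw [hnorm, ← mul_pow]; exact hsq) (by positivity)

theorem sigmaMinSq_le {A : Matrix (Fin d1) (Fin d2) ℝ} {t : ℝ}
    (ht : t ∈ gramNonzeroEigenvalues A) :
    sigmaMinSq A ≤ t :=
  csInf_le ⟨0, fun _ hs => (gramNonzeroEigenvalues_subset_Icc A hs).1⟩ ht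

theorem sigmaMinSq_le_sigmaMax_sq (A : Matrix (Fin d1) (Fin d2) ℝ) :
    sigmaMinSq A ≤ sigmaMax A ^ 2 := by
  rcases (gramNonzeroEigenvalues A).eq_empty_or_nonempty with hempty | ⟨t, ht⟩
  · change sInf (gramNonzeroEigenvalues A) ≤ _
    rw [hempty, Real.sInf_empty]
    positivity
  · exact (sigmaMinSq_le ht).trans (gramNonzeroEigenvalues_subset_Icc A ht).2

theorem adjoint_comp_toEuclideanCLM_gameMatrix (A : Matrix (Fin d1) (Fin d2) ℝ) :
    ContinuousLinearMap.adjoint (toEuclideanCLM (𝕜 := ℝ) (gameMatrix A)) ∘L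
        toEuclideanCLM (𝕜 := ℝ) (gameMatrix A) =
      toEuclideanCLM (𝕜 := ℝ) (fromBlocks (A * Aᵀ) 0 0 (Aᵀ * A)) := by
  rw [← ContinuousLinearMap.star_eq_adjoint, ← map_star, ← ContinuousLinearMap.mul_def,
    ← map_mul]
  congr 1
  simp [gameMatrix, star_eq_conjTranspose, fromBlocks_transpose, fromBlocks_multiply]

theorem mem_gramNonzeroEigenvalues_of_mulVec_transpose_eq {A : Matrix (Fin d1) (Fin d2) ℝ}
    {t : ℝ} (ht : t ≠ 0) {u : Fin d1 → ℝ} (hu : u ≠ 0) (h : (A * Aᵀ) *ᵥ u = t • u) :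
    t ∈ gramNonzeroEigenvalues A := by
  refine ⟨ht, Aᵀ *ᵥ u, fun h0 => hu ?_, ?_⟩
  · rw [← mulVec_mulVec, h0, mulVec_zero] at h
    exact (smul_eq_zero.1 h.symm).resolve_left ht
  · calc (Aᵀ * A) *ᵥ Aᵀ *ᵥ u = Aᵀ *ᵥ (A * Aᵀ) *ᵥ u := by
          simp only [mulVec_mulVec, Matrix.mul_assoc]
      _ = t • Aᵀ *ᵥ u := by rw [h, mulVec_smul]

theorem mem_gramNonzeroEigenvalues_of_hasEigenvalue (A : Matrix (Fin d1) (Fin d2) ℝ) {t : ℝ}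
    (ht : t ≠ 0)
    (h : Module.End.HasEigenvalue (ContinuousLinearMap.adjoint
      (toEuclideanCLM (𝕜 := ℝ) (gameMatrix A)) ∘L
        toEuclideanCLM (𝕜 := ℝ) (gameMatrix A)).toLinearMap t) :
    t ∈ gramNonzeroEigenvalues A := by
  obtain ⟨w, hw, hw0⟩ := h.exists_hasEigenvector
  rw [Module.End.mem_eigenspace_iff, ContinuousLinearMap.coe_coe,
    adjoint_comp_toEuclideanCLM_gameMatrix] at hw
  have hcomp := congrArg WithLp.ofLp hw
  simp only [ofLp_toEuclideanCLM, fromBlocks_mulVec, WithLp.ofLp_smul] at hcomp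
  have hinl : (A * Aᵀ) *ᵥ (w.ofLp ∘ Sum.inl) = t • (w.ofLp ∘ Sum.inl) := by
    simpa [Pi.smul_comp] using congrArg (· ∘ Sum.inl) hcomp
  have hinr : (Aᵀ * A) *ᵥ (w.ofLp ∘ Sum.inr) = t • (w.ofLp ∘ Sum.inr) := by
    simpa [Pi.smul_comp] using congrArg (· ∘ Sum.inr) hcomp
  by_cases hw2 : w.ofLp ∘ Sum.inr = 0
  · refine mem_gramNonzeroEigenvalues_of_mulVec_transpose_eq ht (fun hw1 => hw0 ?_) hinl
    ext (i | j)
    exacts [congrFun hw1 i, congrFun hw2 j]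
  · exact ⟨ht, _, hw2, hinr⟩

end BilinearGame

theorem hgd_bilinear_linear_convergence_general
    {d1 d2 : ℕ}
    (Abar : Matrix (Fin d1) (Fin d2) ℝ) (bbar : Fin d1 → ℝ) (cbar : Fin d2 → ℝ)
    (Xstar : Set (EuclideanSpace ℝ (Fin d1 ⊕ Fin d2)))
    (hXstar : Xstar = {x | xiBar Abar bbar cbar x = 0})
    (γ : ℝ) (hγ : γ = 1 / (2 * sigmaMax Abar ^ 2))
    (x : ℕ → EuclideanSpace ℝ (Fin d1 ⊕ Fin d2))
    (hrec : ∀ k, x (k + 1) = x k - γ • gradient (Ham Abar bbar cbar) (x k))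
    (xstar : EuclideanSpace ℝ (Fin d1 ⊕ Fin d2))
    -- x* is the orthogonal projection of x⁰ onto X*
    (hxstar : xstar ∈ Xstar) (hproj : ∀ y ∈ Xstar, ‖x 0 - xstar‖ ≤ ‖x 0 - y‖) :
    ∀ k : ℕ, ‖x k - xstar‖ ^ 2
      ≤ (1 - γ * sigmaMinSq Abar) ^ k * ‖x 0 - xstar‖ ^ 2 := by
  intro k
  set M := Matrix.toEuclideanCLM (𝕜 := ℝ) (gameMatrix Abar)
  set v : EuclideanSpace ℝ (Fin d1 ⊕ Fin d2) := WithLp.toLp 2 (Sum.elim bbar (-cbar))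
  have hξ (y) : xiBar Abar bbar cbar y = M y + v := xiBar_eq_toEuclideanCLM_add Abar bbar cbar y
  have hH : Ham Abar bbar cbar = fun y => (1 / 2 : ℝ) * ‖M y + v‖ ^ 2 := by
    funext y
    rw [Ham, hξ]
  have hγ0 : 0 ≤ γ := by rw [hγ]; positivity
  have hγσ : γ * sigmaMax Abar ^ 2 ≤ 1 := by
    rw [hγ, one_div, ← div_eq_inv_mul]
    exact div_le_one_of_le₀ (by linarith [sq_nonneg (sigmaMax Abar)]) (by positivity)
  rw [hXstar] at hxstar hproj
  have hMxstar : M xstar + v = 0 := by rw [← hξ]; exact hxstar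
  have h0 : x 0 - xstar ∈ M.kerᗮ := by
    refine Submodule.mem_orthogonal_of_forall_norm_le_norm_sub _ fun w (hw : M w = 0) => ?_
    simpa [sub_sub] using hproj (xstar + w) (by simp [hξ, hw, ← hMxstar])
  refine norm_sub_sq_le_of_gradientDescent_half_norm_sq_add M v hγ0
    ((mul_le_mul_of_nonneg_left (sigmaMinSq_le_sigmaMax_sq Abar) hγ0).trans hγσ)
    (fun t ht h => ?_) (hH ▸ hrec) hMxstar h0 k
  have hmem := mem_gramNonzeroEigenvalues_of_hasEigenvalue Abar ht h
  exact ⟨sigmaMinSq_le hmem,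
    (mul_le_mul_of_nonneg_left (gramNonzeroEigenvalues_subset_Icc Abar hmem).2 hγ0).trans hγσ⟩

theorem hgd_bilinear_linear_convergence
    {n d1 d2 : ℕ} (hn : 0 < n)
    (A : Fin n → Matrix (Fin d1) (Fin d2) ℝ) (b : Fin n → Fin d1 → ℝ)
    (c : Fin n → Fin d2 → ℝ)
    (Abar : Matrix (Fin d1) (Fin d2) ℝ) (bbar : Fin d1 → ℝ) (cbar : Fin d2 → ℝ)
    (hA : Abar = (n : ℝ)⁻¹ • ∑ i, A i)
    (hb : bbar = (n : ℝ)⁻¹ • ∑ i, b i)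
    (hc : cbar = (n : ℝ)⁻¹ • ∑ i, c i)
    (hAne : Abar ≠ 0)
    (Xstar : Set (EuclideanSpace ℝ (Fin d1 ⊕ Fin d2)))
    (hXstar : Xstar = {x | xiBar Abar bbar cbar x = 0})
    (hne : Xstar.Nonempty)
    (γ : ℝ) (hγ : γ = 1 / (2 * sigmaMax Abar ^ 2))
    (x : ℕ → EuclideanSpace ℝ (Fin d1 ⊕ Fin d2))
    (hrec : ∀ k, x (k + 1) = x k - γ • gradient (Ham Abar bbar cbar) (x k))
    (xstar : EuclideanSpace ℝ (Fin d1 ⊕ Fin d2))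
    -- x* is the orthogonal projection of x⁰ onto X*
    (hxstar : xstar ∈ Xstar) (hproj : ∀ y ∈ Xstar, ‖x 0 - xstar‖ ≤ ‖x 0 - y‖) :
    ∀ k : ℕ, ‖x k - xstar‖ ^ 2
      ≤ (1 - γ * sigmaMinSq Abar) ^ k * ‖x 0 - xstar‖ ^ 2 :=
  hgd_bilinear_linear_convergence_general Abar bbar cbar Xstar hXstar γ hγ x hrec xstar hxstar hproj

end
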